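/- Define two Lie brackets on ℝ⁶ in terms of the standard basis e_1, …, e_6: for the first, the only nonzero brackets of basis vectors (up to antisymmetry) are ⁅e_1,e_2⁆ = e_3, ⁅e_1,e_3⁆ = −e_4, ⁅e_2,e_3⁆ = e_5, ⁅e_1,e_4⁆ = e_6, ⁅e_2,e_5⁆ = e_6; for the second, they are ⁅e_1,e_2⁆ = e_3, ⁅e_1,e_3⁆ = e_4, ⁅e_2,e_3⁆ = e_5, ⁅e_2,e_4⁆ = e_6, ⁅e_1,e_5⁆ = e_6. Then both brackets satisfy the Jacobi identity, the standard basis is nice for both, the two resulting Lie algebras are isomorphic (both isomorphic to N_{6,2,5}), but the two nice bases are not equivalent: there is no Lie algebra isomorphism between them mapping each basis vector to a nonzero scalar multiple of a basis vector. -/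
import Mathlib


/-- The bracket `6431:2b`: `(0, 0, e¹², −e¹³, e²³, e¹⁴ + e²⁵)` on `ℝ⁶`. -/
noncomputable def br₁ (x y : Fin 6 → ℝ) : Fin 6 → ℝ :=
  ![0, 0,
    x 0 * y 1 - x 1 * y 0,
    -(x 0 * y 2 - x 2 * y 0),
    x 1 * y 2 - x 2 * y 1,
    (x 0 * y 3 - x 3 * y 0) + (x 1 * y 4 - x 4 * y 1)]

/-- The bracket `6431:3`: `(0, 0, e¹², e¹³, e²³, e²⁴ + e¹⁵)` on `ℝ⁶`. -/
noncomputable def br₂ (x y : Fin 6 → ℝ) : Fin 6 → ℝ :=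
  ![0, 0,
    x 0 * y 1 - x 1 * y 0,
    x 0 * y 2 - x 2 * y 0,
    x 1 * y 2 - x 2 * y 1,
    (x 1 * y 3 - x 3 * y 1) + (x 0 * y 4 - x 4 * y 0)]

theorem vec6_0 {α : Type*} (a b c d e f : α) : ![a,b,c,d,e,f] (0 : Fin 6) = a := rfl
theorem vec6_1 {α : Type*} (a b c d e f : α) : ![a,b,c,d,e,f] (1 : Fin 6) = b := rfl
theorem vec6_2 {α : Type*} (a b c d e f : α) : ![a,b,c,d,e,f] (2 : Fin 6) = c := rfl
theorem vec6_3 {α : Type*} (a b c d e f : α) : ![a,b,c,d,e,f] (3 : Fin 6) = d := rfl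
theorem vec6_4 {α : Type*} (a b c d e f : α) : ![a,b,c,d,e,f] (4 : Fin 6) = e := rfl
theorem vec6_5 {α : Type*} (a b c d e f : α) : ![a,b,c,d,e,f] (5 : Fin 6) = f := rfl
theorem vec6_mk0 {α : Type*} (a b c d e f : α) (h : 0 < 6) : ![a,b,c,d,e,f] ⟨0,h⟩ = a := rfl
theorem vec6_mk1 {α : Type*} (a b c d e f : α) (h : 1 < 6) : ![a,b,c,d,e,f] ⟨1,h⟩ = b := rfl
theorem vec6_mk2 {α : Type*} (a b c d e f : α) (h : 2 < 6) : ![a,b,c,d,e,f] ⟨2,h⟩ = c := rfl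
theorem vec6_mk3 {α : Type*} (a b c d e f : α) (h : 3 < 6) : ![a,b,c,d,e,f] ⟨3,h⟩ = d := rfl
theorem vec6_mk4 {α : Type*} (a b c d e f : α) (h : 4 < 6) : ![a,b,c,d,e,f] ⟨4,h⟩ = e := rfl
theorem vec6_mk5 {α : Type*} (a b c d e f : α) (h : 5 < 6) : ![a,b,c,d,e,f] ⟨5,h⟩ = f := rfl

/-- integer version of br₁ -/
def brZ₁ (x y : Fin 6 → ℤ) : Fin 6 → ℤ :=
  ![0, 0,
    x 0 * y 1 - x 1 * y 0,
    -(x 0 * y 2 - x 2 * y 0),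
    x 1 * y 2 - x 2 * y 1,
    (x 0 * y 3 - x 3 * y 0) + (x 1 * y 4 - x 4 * y 1)]

def brZ₂ (x y : Fin 6 → ℤ) : Fin 6 → ℤ :=
  ![0, 0,
    x 0 * y 1 - x 1 * y 0,
    x 0 * y 2 - x 2 * y 0,
    x 1 * y 2 - x 2 * y 1,
    (x 1 * y 3 - x 3 * y 1) + (x 0 * y 4 - x 4 * y 0)]

def sZ (i : Fin 6) : Fin 6 → ℤ := fun m => if i = m then 1 else 0

def c₁ (i j : Fin 6) : Fin 6 → ℤ := brZ₁ (sZ i) (sZ j)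
def c₂ (i j : Fin 6) : Fin 6 → ℤ := brZ₂ (sZ i) (sZ j)

theorem cast₁ (x y : Fin 6 → ℤ) :
    br₁ (fun m => (x m : ℝ)) (fun m => (y m : ℝ)) = fun k => ((brZ₁ x y k : ℤ) : ℝ) := by
  funext k
  fin_cases k <;>
    simp only [br₁, brZ₁, vec6_0, vec6_1, vec6_2, vec6_3, vec6_4, vec6_5,
      vec6_mk0, vec6_mk1, vec6_mk2, vec6_mk3, vec6_mk4, vec6_mk5] <;>
    push_cast <;> ring

theorem cast₂ (x y : Fin 6 → ℤ) :
    br₂ (fun m => (x m : ℝ)) (fun m => (y m : ℝ)) = fun k => ((brZ₂ x y k : ℤ) : ℝ) := by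
  funext k
  fin_cases k <;>
    simp only [br₂, brZ₂, vec6_0, vec6_1, vec6_2, vec6_3, vec6_4, vec6_5,
      vec6_mk0, vec6_mk1, vec6_mk2, vec6_mk3, vec6_mk4, vec6_mk5] <;>
    push_cast <;> ring

theorem Pcast (i : Fin 6) : (Pi.single i 1 : Fin 6 → ℝ) = fun m => ((sZ i m : ℤ) : ℝ) := by
  funext m
  simp only [sZ, Pi.single_apply]
  split_ifs with h1 h2 h2 <;> simp_all [eq_comm]

theorem brP₁ (i j : Fin 6) :
    br₁ (Pi.single i 1) (Pi.single j 1) = fun k => ((c₁ i j k : ℤ) : ℝ) := by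
  rw [Pcast, Pcast, cast₁]; rfl

theorem brP₂ (i j : Fin 6) :
    br₂ (Pi.single i 1) (Pi.single j 1) = fun k => ((c₂ i j k : ℤ) : ℝ) := by
  rw [Pcast, Pcast, cast₂]; rfl

def tgt (cf : Fin 6 → Fin 6 → Fin 6 → ℤ) (i j : Fin 6) : Fin 6 :=
  if cf i j 2 ≠ 0 then 2 else if cf i j 3 ≠ 0 then 3 else
    if cf i j 4 ≠ 0 then 4 else if cf i j 5 ≠ 0 then 5 else 0

theorem hzero₁ : ∀ i j m : Fin 6, m ≠ tgt c₁ i j → c₁ i j m = 0 := by decide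
theorem hzero₂ : ∀ i j m : Fin 6, m ≠ tgt c₂ i j → c₂ i j m = 0 := by decide
theorem uniq₁ : ∀ i k j j' : Fin 6, c₁ i j k ≠ 0 → c₁ i j' k ≠ 0 → j = j' := by decide
theorem uniq₂ : ∀ i k j j' : Fin 6, c₂ i j k ≠ 0 → c₂ i j' k ≠ 0 → j = j' := by decide
theorem chain₂ : ∀ a b c d f : Fin 6,
    c₂ a b c ≠ 0 → c₂ a c d ≠ 0 → c₂ a d f = 0 := by decide

/-- The standard basis is nice for the bracket `μ`. -/
def StdBasisNice (μ : (Fin 6 → ℝ) → (Fin 6 → ℝ) → (Fin 6 → ℝ)) : Prop :=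
  (∀ i j : Fin 6, ∃ (k : Fin 6) (c : ℝ),
    μ (Pi.single i 1) (Pi.single j 1) = c • (Pi.single k 1 : Fin 6 → ℝ)) ∧
  (∀ i k j j' : Fin 6, μ (Pi.single i 1) (Pi.single j 1) k ≠ 0 →
    μ (Pi.single i 1) (Pi.single j' 1) k ≠ 0 → j = j')

theorem nice₁ : StdBasisNice br₁ := by
  constructor
  · intro i j
    refine ⟨tgt c₁ i j, ((c₁ i j (tgt c₁ i j) : ℤ) : ℝ), ?_⟩
    rw [brP₁]
    funext m
    by_cases hm : m = tgt c₁ i j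
    · subst hm; simp [Pi.single_eq_same]
    · simp [hzero₁ i j m hm, Pi.single_eq_of_ne hm]
  · intro i k j j' h h'
    rw [congrFun (brP₁ i j) k] at h
    rw [congrFun (brP₁ i j') k] at h'
    exact uniq₁ i k j j' (by exact_mod_cast h) (by exact_mod_cast h')

theorem nice₂ : StdBasisNice br₂ := by
  constructor
  · intro i j
    refine ⟨tgt c₂ i j, ((c₂ i j (tgt c₂ i j) : ℤ) : ℝ), ?_⟩
    rw [brP₂]
    funext m
    by_cases hm : m = tgt c₂ i j
    · subst hm; simp [Pi.single_eq_same]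
    · simp [hzero₂ i j m hm, Pi.single_eq_of_ne hm]
  · intro i k j j' h h'
    rw [congrFun (brP₂ i j) k] at h
    rw [congrFun (brP₂ i j') k] at h'
    exact uniq₂ i k j j' (by exact_mod_cast h) (by exact_mod_cast h')

theorem app_mk0 (x : Fin 6 → ℝ) (h : 0 < 6) : x ⟨0,h⟩ = x 0 := rfl
theorem app_mk1 (x : Fin 6 → ℝ) (h : 1 < 6) : x ⟨1,h⟩ = x 1 := rfl
theorem app_mk2 (x : Fin 6 → ℝ) (h : 2 < 6) : x ⟨2,h⟩ = x 2 := rfl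
theorem app_mk3 (x : Fin 6 → ℝ) (h : 3 < 6) : x ⟨3,h⟩ = x 3 := rfl
theorem app_mk4 (x : Fin 6 → ℝ) (h : 4 < 6) : x ⟨4,h⟩ = x 4 := rfl
theorem app_mk5 (x : Fin 6 → ℝ) (h : 5 < 6) : x ⟨5,h⟩ = x 5 := rfl

noncomputable def Amap : (Fin 6 → ℝ) →ₗ[ℝ] (Fin 6 → ℝ) where
  toFun x := ![x 0 + x 1, x 0 - x 1, -2*x 2, 2*x 3 - 2*x 4, 2*x 3 + 2*x 4, 4*x 5]
  map_add' x y := by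
    funext k
    fin_cases k <;>
      simp only [Pi.add_apply, vec6_0, vec6_1, vec6_2, vec6_3, vec6_4, vec6_5,
        vec6_mk0, vec6_mk1, vec6_mk2, vec6_mk3, vec6_mk4, vec6_mk5] <;> ring
  map_smul' s x := by
    funext k
    fin_cases k <;>
      simp only [Pi.smul_apply, smul_eq_mul, RingHom.id_apply,
        vec6_0, vec6_1, vec6_2, vec6_3, vec6_4, vec6_5,
        vec6_mk0, vec6_mk1, vec6_mk2, vec6_mk3, vec6_mk4, vec6_mk5] <;> ring

noncomputable def Bmap : (Fin 6 → ℝ) →ₗ[ℝ] (Fin 6 → ℝ) where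
  toFun x := ![(x 0 + x 1)/2, (x 0 - x 1)/2, -(x 2)/2, (x 3 + x 4)/4, (x 4 - x 3)/4, x 5/4]
  map_add' x y := by
    funext k
    fin_cases k <;>
      simp only [Pi.add_apply, vec6_0, vec6_1, vec6_2, vec6_3, vec6_4, vec6_5,
        vec6_mk0, vec6_mk1, vec6_mk2, vec6_mk3, vec6_mk4, vec6_mk5] <;> ring
  map_smul' s x := by
    funext k
    fin_cases k <;>
      simp only [Pi.smul_apply, smul_eq_mul, RingHom.id_apply,
        vec6_0, vec6_1, vec6_2, vec6_3, vec6_4, vec6_5,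
        vec6_mk0, vec6_mk1, vec6_mk2, vec6_mk3, vec6_mk4, vec6_mk5] <;> ring

noncomputable def φ₀ : (Fin 6 → ℝ) ≃ₗ[ℝ] (Fin 6 → ℝ) :=
  LinearEquiv.ofLinear Amap Bmap
    (by
      apply LinearMap.ext; intro x
      funext k
      fin_cases k <;>
        simp only [LinearMap.comp_apply, LinearMap.id_apply, Amap, Bmap, LinearMap.coe_mk,
          AddHom.coe_mk, vec6_0, vec6_1, vec6_2, vec6_3, vec6_4, vec6_5,
          vec6_mk0, vec6_mk1, vec6_mk2, vec6_mk3, vec6_mk4, vec6_mk5,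
          app_mk0, app_mk1, app_mk2, app_mk3, app_mk4, app_mk5] <;> ring)
    (by
      apply LinearMap.ext; intro x
      funext k
      fin_cases k <;>
        simp only [LinearMap.comp_apply, LinearMap.id_apply, Amap, Bmap, LinearMap.coe_mk,
          AddHom.coe_mk, vec6_0, vec6_1, vec6_2, vec6_3, vec6_4, vec6_5,
          vec6_mk0, vec6_mk1, vec6_mk2, vec6_mk3, vec6_mk4, vec6_mk5,
          app_mk0, app_mk1, app_mk2, app_mk3, app_mk4, app_mk5] <;> ring)

theorem φ₀_hom : ∀ x y, φ₀ (br₁ x y) = br₂ (φ₀ x) (φ₀ y) := by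
  intro x y
  have hφ : ∀ z, φ₀ z = ![z 0 + z 1, z 0 - z 1, -2*z 2, 2*z 3 - 2*z 4, 2*z 3 + 2*z 4, 4*z 5] :=
    fun z => rfl
  rw [hφ, hφ, hφ]
  funext k
  fin_cases k <;>
    simp only [br₁, br₂, vec6_0, vec6_1, vec6_2, vec6_3, vec6_4, vec6_5,
      vec6_mk0, vec6_mk1, vec6_mk2, vec6_mk3, vec6_mk4, vec6_mk5] <;> ring
theorem e01 : br₁ (Pi.single 0 1) (Pi.single 1 1) = (Pi.single 2 1 : Fin 6 → ℝ) := by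
  rw [brP₁, Pcast, show c₁ 0 1 = sZ 2 from by decide]

theorem e02 : br₁ (Pi.single 0 1) (Pi.single 2 1) = -(Pi.single 3 1 : Fin 6 → ℝ) := by
  rw [brP₁, Pcast, show c₁ 0 2 = -sZ 3 from by decide]
  funext k
  simp

theorem e03 : br₁ (Pi.single 0 1) (Pi.single 3 1) = (Pi.single 5 1 : Fin 6 → ℝ) := by
  rw [brP₁, Pcast, show c₁ 0 3 = sZ 5 from by decide]

theorem smul₂ (s t : ℝ) (x y : Fin 6 → ℝ) :
    br₂ (s • x) (t • y) = (s * t) • br₂ x y := by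
  funext k
  fin_cases k <;>
    simp only [br₂, Pi.smul_apply, smul_eq_mul, vec6_0, vec6_1, vec6_2, vec6_3, vec6_4, vec6_5,
      vec6_mk0, vec6_mk1, vec6_mk2, vec6_mk3, vec6_mk4, vec6_mk5] <;> ring

/-- The two brackets `br₁`, `br₂` satisfy the Jacobi identity, the standard basis is nice
for both, the two resulting Lie algebras are isomorphic (to `N_{6,2,5}`), but the two
nice bases are not equivalent. -/
theorem two_inequivalent_nice_bases_on_N625 :
    (∀ x y z : Fin 6 → ℝ, br₁ (br₁ x y) z + br₁ (br₁ y z) x + br₁ (br₁ z x) y = 0) ∧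
    (∀ x y z : Fin 6 → ℝ, br₂ (br₂ x y) z + br₂ (br₂ y z) x + br₂ (br₂ z x) y = 0) ∧
    StdBasisNice br₁ ∧ StdBasisNice br₂ ∧
    (∃ φ : (Fin 6 → ℝ) ≃ₗ[ℝ] (Fin 6 → ℝ), ∀ x y, φ (br₁ x y) = br₂ (φ x) (φ y)) ∧
    ¬ ∃ (φ : (Fin 6 → ℝ) ≃ₗ[ℝ] (Fin 6 → ℝ)),
        (∀ x y, φ (br₁ x y) = br₂ (φ x) (φ y)) ∧
        ∃ (σ : Equiv.Perm (Fin 6)) (l : Fin 6 → ℝ),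
          (∀ i, l i ≠ 0) ∧
          ∀ i, φ (Pi.single i 1) = l i • (Pi.single (σ i) 1 : Fin 6 → ℝ) := by
  refine ⟨?_, ?_, nice₁, nice₂, ⟨φ₀, φ₀_hom⟩, ?_⟩
  · intro x y z
    funext k
    fin_cases k <;>
      simp only [br₁, Pi.add_apply, Pi.zero_apply,
        vec6_0, vec6_1, vec6_2, vec6_3, vec6_4, vec6_5,
        vec6_mk0, vec6_mk1, vec6_mk2, vec6_mk3, vec6_mk4, vec6_mk5] <;>
      ring
  · intro x y z
    funext k
    fin_cases k <;>
      simp only [br₂, Pi.add_apply, Pi.zero_apply,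
        vec6_0, vec6_1, vec6_2, vec6_3, vec6_4, vec6_5,
        vec6_mk0, vec6_mk1, vec6_mk2, vec6_mk3, vec6_mk4, vec6_mk5] <;>
      ring
  · rintro ⟨φ, hhom, σ, l, hl, hb⟩
    have H1 : l 2 • (Pi.single (σ 2) 1 : Fin 6 → ℝ)
        = (l 0 * l 1) • br₂ (Pi.single (σ 0) 1) (Pi.single (σ 1) 1) := by
      have h := hhom (Pi.single 0 1) (Pi.single 1 1)
      rw [e01, hb 2, hb 0, hb 1, smul₂] at h
      exact h
    have H2 : -(l 3 • (Pi.single (σ 3) 1 : Fin 6 → ℝ))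
        = (l 0 * l 2) • br₂ (Pi.single (σ 0) 1) (Pi.single (σ 2) 1) := by
      have h := hhom (Pi.single 0 1) (Pi.single 2 1)
      rw [e02, map_neg, hb 3, hb 0, hb 2, smul₂] at h
      exact h
    have H4 : l 5 • (Pi.single (σ 5) 1 : Fin 6 → ℝ)
        = (l 0 * l 3) • br₂ (Pi.single (σ 0) 1) (Pi.single (σ 3) 1) := by
      have h := hhom (Pi.single 0 1) (Pi.single 3 1)
      rw [e03, hb 5, hb 0, hb 3, smul₂] at h
      exact h
    rw [brP₂] at H1 H2 H4
    have k1 : c₂ (σ 0) (σ 1) (σ 2) ≠ 0 := by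
      intro hz
      apply hl 2
      have h := congrFun H1 (σ 2)
      simpa [Pi.single_eq_same, hz] using h
    have k2 : c₂ (σ 0) (σ 2) (σ 3) ≠ 0 := by
      intro hz
      apply hl 3
      have h := congrFun H2 (σ 3)
      simpa [Pi.single_eq_same, hz] using h
    apply hl 5
    have h := congrFun H4 (σ 5)
    simpa [Pi.single_eq_same, chain₂ (σ 0) (σ 1) (σ 2) (σ 3) (σ 5) k1 k2] using h
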